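/- arXiv:2412.10963 — 6 statements merged into one kernel-verified Lean document; each statement's English description precedes it below -/
import Mathlib

section
/- Let m be a positive integer, X a connected simplicial set, and p a simplicial distribution on the scenario (X, ⊔_{Z_m} Δ_{Z_m}). Then: (0) for each j ∈ ZMod m the total mass λ_j := Σ_{a : Fin(n+1) → ZMod m} p_x(j,a) is the same for every simplex x ∈ X_n, and Σ_j λ_j = 1; moreover, for each j with λ_j ≠ 0 the family p^{(j)} given by p^{(j)}_x(a) = p_x(j,a)/λ_j is a simplicial distribution on (X, Δ_{Z_m}). (1) p is noncontextual if and only if p^{(j)} is noncontextual for every j with λ_j ≠ 0. (2) p is a vertex of sDist(X, ⊔_{Z_m} Δ_{Z_m}) if and only if there is j ∈ ZMod m with λ_j = 1 such that p^{(j)} is a vertex of sDist(X, Δ_{Z_m}). -/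
open CategoryTheory Simplicial Opposite
open scoped NNReal BigOperators

universe u

/-- A distribution on a type `S`: a finitely supported function to `ℝ≥0` with total sum 1. -/
structure FDist (S : Type u) : Type u where
  toFun : S → ℝ≥0
  finite_support : (Function.support toFun).Finite
  sum_one : ∑ᶠ s, toFun s = 1

/-- A simplicial distribution on the simplicial scenario `(X, Y)`. -/
structure SDist (X Y : SSet.{u}) : Type u where
  d : ∀ n : ℕ, X _⦋n⦌ → FDist (Y _⦋n⦌)
  compat : ∀ {k n : ℕ} (α : (⦋k⦌ : SimplexCategory) ⟶ ⦋n⦌) (x : X _⦋n⦌) (y : Y _⦋k⦌),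
    (d k (X.map α.op x)).toFun y = ∑ᶠ y' ∈ {y' : Y _⦋n⦌ | Y.map α.op y' = y}, (d n x).toFun y'

/-- The simplicial set `Δ_{ℤ_m}` whose `n`-simplices are functions `Fin (n+1) → ZMod m`. -/
def DeltaZ (m : ℕ) : SSet.{0} where
  obj U := Fin (U.unop.len + 1) → ZMod m
  map α := TypeCat.ofHom (fun a => a ∘ α.unop.toOrderHom)
  map_id := by intros; rfl
  map_comp := by intros; rfl

/-- The disjoint union `⊔_{ℤ_m} Δ_{ℤ_m}` of `m` copies of `Δ_{ℤ_m}`. -/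
def DeltaZSum (m : ℕ) : SSet.{0} where
  obj U := ZMod m × (Fin (U.unop.len + 1) → ZMod m)
  map α := TypeCat.ofHom (fun x => (x.1, x.2 ∘ α.unop.toOrderHom))
  map_id := by intros; rfl
  map_comp := by intros; rfl

instance (m : ℕ) (U : SimplexCategoryᵒᵖ) : AddCommGroup ((DeltaZ m).obj U) :=
  Pi.addCommGroup

/-- The edge relation on vertices of a simplicial set. -/
def EdgeRel (X : SSet.{u}) (a b : X _⦋0⦌) : Prop :=
  ∃ σ : X _⦋1⦌, X.δ 1 σ = a ∧ X.δ 0 σ = b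

/-- A simplicial set is connected if any two vertices are related by the equivalence
relation generated by the edge relation. -/
def SConnected (X : SSet.{u}) : Prop :=
  ∀ a b : X _⦋0⦌, Relation.EqvGen (EdgeRel X) a b

/-- A simplicial distribution is noncontextual if it is a mixture of deterministic
distributions. -/
def Noncontextual {X Y : SSet.{u}} (p : SDist X Y) : Prop :=
  ∃ Q : FDist (X ⟶ Y), ∀ (n : ℕ) (x : X _⦋n⦌) (y : Y _⦋n⦌),
    (p.d n x).toFun y = ∑ᶠ φ ∈ setOf (fun φ : X ⟶ Y => φ.app (op ⦋n⦌) x = y), Q.toFun φ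

/-- A vertex (extreme point) of the convex set of simplicial distributions. -/
def IsVertex {X Y : SSet.{u}} (p : SDist X Y) : Prop :=
  ∀ (q q' : SDist X Y) (t : ℝ), 0 < t → t < 1 →
    (∀ (n : ℕ) (x : X _⦋n⦌) (y : Y _⦋n⦌),
      ((p.d n x).toFun y : ℝ) = t * ((q.d n x).toFun y : ℝ) + (1 - t) * ((q'.d n x).toFun y : ℝ)) →
    q = q'

/-- `q ⪯ p` : the support of `q` is contained in that of `p`. -/
def Pre {X Y : SSet.{u}} (q p : SDist X Y) : Prop :=
  ∀ (n : ℕ) (x : X _⦋n⦌) (y : Y _⦋n⦌), (q.d n x).toFun y ≠ 0 → (p.d n x).toFun y ≠ 0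

/-!
On a connected simplicial set the mass `λ_j` that `p` gives to the `j`-th copy of `Δ_{ℤ_m}` is
invariant under the simplicial operators, hence constant, and every simplicial map
`X ⟶ ⊔ Δ_{ℤ_m}` lands in a single copy. A mixture `Q` of deterministic maps therefore splits by
colour into mixtures `λ_j Q_j` of maps `X ⟶ Δ_{ℤ_m}` reproducing the components `p^{(j)}`, and
conversely the `Q_j` reassemble into such a `Q`. If some `0 < λ_j < 1`, reweighting `p` colourwise
writes it as a proper mixture of its part on colour `j` and its part off colour `j`, so `p` is not
a vertex. If `λ_j = 1`, `p` is the copy of `p^{(j)}` on colour `j`, and since a mixture has mass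
`1` on a colour only if both summands do, decompositions of `p` and of `p^{(j)}` correspond.
-/

open Finset

instance (m : ℕ) [NeZero m] (U : SimplexCategoryᵒᵖ) : Fintype ((DeltaZ m).obj U) :=
  inferInstanceAs (Fintype (Fin (U.unop.len + 1) → ZMod m))

instance (m : ℕ) [NeZero m] (U : SimplexCategoryᵒᵖ) : Fintype ((DeltaZSum m).obj U) :=
  inferInstanceAs (Fintype (ZMod m × (Fin (U.unop.len + 1) → ZMod m)))

instance (m : ℕ) (U : SimplexCategoryᵒᵖ) : DecidableEq ((DeltaZ m).obj U) :=
  inferInstanceAs (DecidableEq (Fin (U.unop.len + 1) → ZMod m))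

instance (m : ℕ) (U : SimplexCategoryᵒᵖ) : DecidableEq ((DeltaZSum m).obj U) :=
  inferInstanceAs (DecidableEq (ZMod m × (Fin (U.unop.len + 1) → ZMod m)))

section Finsum

variable {α β M : Type*} [AddCommMonoid M]

lemma finsum_mem_setOf_eq_sum_filter [Fintype α] (P : α → Prop) [DecidablePred P] (f : α → M) :
    ∑ᶠ a ∈ {a | P a}, f a = ∑ a with P a, f a := by
  rw [← Finset.coe_filter_univ, finsum_mem_coe_finset]

lemma sum_finsum_mem_fiber [Fintype β] (f : α → M) (hf : (Function.support f).Finite)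
    (g : α → β) : ∑ b, ∑ᶠ a ∈ {a | g a = b}, f a = ∑ᶠ a, f a := by
  classical
  rw [finsum_eq_sum f hf, ← Finset.sum_fiberwise hf.toFinset g f]
  refine Finset.sum_congr rfl fun b _ => ?_
  rw [finsum_mem_eq_sum_filter _ _ hf]
  rfl

end Finsum

namespace FDist

variable {S : Type u}

lemma toFun_injective : Function.Injective (toFun : FDist S → S → ℝ≥0) := by
  rintro ⟨f, _, _⟩ ⟨g, _, _⟩ rfl
  rfl

lemma sum_eq_one [Fintype S] (P : FDist S) : ∑ s, P.toFun s = 1 := by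
  rw [← finsum_eq_sum_of_fintype]
  exact P.sum_one

def pure [DecidableEq S] (s₀ : S) : FDist S where
  toFun := Pi.single s₀ 1
  finite_support := (Set.finite_singleton s₀).subset Pi.support_single_subset
  sum_one := by
    rw [finsum_eq_single _ s₀ fun s hs => Pi.single_eq_of_ne hs 1, Pi.single_eq_same]

end FDist

namespace SDist

variable {X Y : SSet.{u}}

lemma ext {p q : SDist X Y} (h : ∀ n x y, (p.d n x).toFun y = (q.d n x).toFun y) : p = q := by
  obtain ⟨p, _⟩ := p
  obtain ⟨q, _⟩ := q
  congr
  funext n x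
  exact FDist.toFun_injective (funext (h n x))

variable [∀ n, Fintype (Y _⦋n⦌)] [∀ n, DecidableEq (Y _⦋n⦌)]

lemma apply_map_eq_sum (p : SDist X Y) {k n : ℕ} (α : ⦋k⦌ ⟶ ⦋n⦌) (x : X _⦋n⦌) (y : Y _⦋k⦌) :
    (p.d k (X.map α.op x)).toFun y = ∑ y' with Y.map α.op y' = y, (p.d n x).toFun y' := by
  rw [p.compat, finsum_mem_setOf_eq_sum_filter]

def ofSum (f : ∀ n, X _⦋n⦌ → Y _⦋n⦌ → ℝ≥0) (sum_eq_one : ∀ n x, ∑ y, f n x y = 1)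
    (map_eq : ∀ {k n : ℕ} (α : ⦋k⦌ ⟶ ⦋n⦌) (x : X _⦋n⦌) (y : Y _⦋k⦌),
      f k (X.map α.op x) y = ∑ y' with Y.map α.op y' = y, f n x y') : SDist X Y where
  d n x :=
    { toFun := f n x
      finite_support := Set.toFinite _
      sum_one := by rw [finsum_eq_sum_of_fintype, sum_eq_one] }
  compat α x y := by
    rw [finsum_mem_setOf_eq_sum_filter]
    exact map_eq α x y

end SDist

def IsMix {X Y : SSet.{u}} (t : ℝ) (q q' p : SDist X Y) : Prop :=
  ∀ (n : ℕ) (x : X _⦋n⦌) (y : Y _⦋n⦌),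
    ((p.d n x).toFun y : ℝ) = t * ((q.d n x).toFun y : ℝ) + (1 - t) * ((q'.d n x).toFun y : ℝ)

lemma SConnected.eq_of_map_eq {X : SSet.{u}} (hX : SConnected X) {β : Type*}
    (f : ∀ n, X _⦋n⦌ → β)
    (hf : ∀ {k n : ℕ} (α : ⦋k⦌ ⟶ ⦋n⦌) (x : X _⦋n⦌), f k (X.map α.op x) = f n x)
    {k n : ℕ} (x : X _⦋k⦌) (y : X _⦋n⦌) : f k x = f n y := by
  have h₀ : ∀ a b : X _⦋0⦌, f 0 a = f 0 b := fun a b => by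
    induction hX a b with
    | rel a b h =>
      obtain ⟨σ, rfl, rfl⟩ := h
      exact (hf _ σ).trans (hf _ σ).symm
    | refl => rfl
    | symm _ _ _ ih => exact ih.symm
    | trans _ _ _ _ _ ih₁ ih₂ => exact ih₁.trans ih₂
  calc f k x = f 0 (X.map (SimplexCategory.const ⦋0⦌ ⦋k⦌ 0).op x) := (hf _ x).symm
    _ = f 0 (X.map (SimplexCategory.const ⦋0⦌ ⦋n⦌ 0).op y) := h₀ _ _
    _ = f n y := hf _ y

lemma noncontextual_of_marginals {X Y : SSet.{u}} [Fintype (Y _⦋0⦌)] (p : SDist X Y)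
    (pt : X _⦋0⦌) (f : (X ⟶ Y) → ℝ≥0) (hf : (Function.support f).Finite)
    (h : ∀ n (x : X _⦋n⦌) (y : Y _⦋n⦌),
      (p.d n x).toFun y = ∑ᶠ φ ∈ {φ | φ.app (op ⦋n⦌) x = y}, f φ) :
    Noncontextual p := by
  refine ⟨⟨f, hf, ?_⟩, h⟩
  rw [← sum_finsum_mem_fiber f hf (fun φ => φ.app (op ⦋0⦌) pt), ← (p.d 0 pt).sum_eq_one]
  exact Finset.sum_congr rfl fun y _ => (h 0 pt y).symm

section Empty

variable {X Y : SSet.{u}}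

lemma isEmpty_of_not_nonempty (hX : ¬ X.Nonempty) (n : ℕ) : IsEmpty (X _⦋n⦌) :=
  have := not_nonempty_iff.1 hX
  Function.isEmpty (X.map (SimplexCategory.const ⦋0⦌ ⦋n⦌ 0).op)

lemma noncontextual_of_not_nonempty (hX : ¬ X.Nonempty) (p : SDist X Y) : Noncontextual p := by
  classical
  exact ⟨FDist.pure ((SSet.isInitialOfNotNonempty hX).to Y),
    fun n x => (isEmpty_of_not_nonempty hX n).elim x⟩

lemma isVertex_of_not_nonempty (hX : ¬ X.Nonempty) (p : SDist X Y) : IsVertex p :=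
  fun _ _ _ _ _ _ => SDist.ext fun n x => (isEmpty_of_not_nonempty hX n).elim x

end Empty

namespace DeltaZSum

variable {m : ℕ} {X : SSet.{0}}

/-- The pair `(j, a)`, typed as a simplex of `DeltaZSum m`: rewriting then never has to unfold
`DeltaZSum` or `DeltaZ` to see that the pair is well typed. -/
def mk {n : ℕ} (j : ZMod m) (a : (DeltaZ m) _⦋n⦌) : (DeltaZSum m) _⦋n⦌ := (j, a)

def ι (j : ZMod m) : DeltaZ m ⟶ DeltaZSum m where
  app _ := TypeCat.ofHom fun a => (j, a)

def π : DeltaZSum m ⟶ DeltaZ m where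
  app _ := TypeCat.ofHom fun y => y.2

@[simp]
lemma ι_π (j : ZMod m) : ι j ≫ π = 𝟙 (DeltaZ m) :=
  rfl

lemma comp_ι_injective (j : ZMod m) : Function.Injective fun ψ : X ⟶ DeltaZ m => ψ ≫ ι j :=
  fun ψ ψ' h => by simpa using congrArg (· ≫ π) h

lemma eq_comp_π_comp_ι (hX : SConnected X) (φ : X ⟶ DeltaZSum m) {n : ℕ} (x₀ : X _⦋n⦌) :
    φ = (φ ≫ π) ≫ ι (φ.app (op ⦋n⦌) x₀).1 := by
  ext U x
  refine Prod.ext ?_ rfl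
  exact hX.eq_of_map_eq (fun n x => (φ.app (op ⦋n⦌) x).1)
    (fun α x => congrArg Prod.fst (NatTrans.naturality_apply φ α.op x)) (k := U.unop.len) x x₀

lemma finsum_mem_app_eq_mk (hX : SConnected X) (f : (X ⟶ DeltaZSum m) → ℝ≥0)
    (j : ZMod m) {n : ℕ} (x : X _⦋n⦌) (a : (DeltaZ m) _⦋n⦌) :
    ∑ᶠ φ ∈ {φ | φ.app (op ⦋n⦌) x = mk j a}, f φ
      = ∑ᶠ ψ ∈ {ψ | ψ.app (op ⦋n⦌) x = a}, f (ψ ≫ ι j) := by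
  have himage : {φ | φ.app (op ⦋n⦌) x = mk j a} = (· ≫ ι j) '' {ψ | ψ.app (op ⦋n⦌) x = a} := by
    ext φ
    constructor
    · intro hφ
      refine ⟨φ ≫ π, congrArg Prod.snd hφ, ?_⟩
      have hφ' := eq_comp_π_comp_ι hX φ x
      rw [hφ] at hφ'
      exact hφ'.symm
    · rintro ⟨ψ, hψ, rfl⟩
      exact congrArg (mk j) hψ
  rw [himage, finsum_mem_image (comp_ι_injective j).injOn]

variable [NeZero m]

lemma sum_eq {n : ℕ} (g : (DeltaZSum m) _⦋n⦌ → ℝ≥0) :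
    ∑ y, g y = ∑ j, ∑ a : (DeltaZ m) _⦋n⦌, g (mk j a) :=
  Fintype.sum_prod_type _

lemma sum_filter_map_eq {k n : ℕ} (α : ⦋k⦌ ⟶ ⦋n⦌) (g : (DeltaZSum m) _⦋n⦌ → ℝ≥0)
    (j : ZMod m) (b : (DeltaZ m) _⦋k⦌) :
    ∑ y with (DeltaZSum m).map α.op y = mk j b, g y
      = ∑ a with (DeltaZ m).map α.op a = b, g (mk j a) := by
  rw [Finset.sum_filter, Finset.sum_filter, sum_eq, Finset.sum_eq_single j]
  · exact Finset.sum_congr rfl fun a _ => if_congr (Prod.mk_right_injective j).eq_iff rfl rfl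
  · intro i _ hi
    refine Finset.sum_eq_zero fun a _ => if_neg fun h => hi (congrArg Prod.fst h)
  · simp

end DeltaZSum

namespace SDist

variable {m : ℕ} {X : SSet.{0}}

lemma ext_mk {p q : SDist X (DeltaZSum m)}
    (h : ∀ n x j a, (p.d n x).toFun (DeltaZSum.mk j a) = (q.d n x).toFun (DeltaZSum.mk j a)) :
    p = q :=
  ext fun n x y => h n x y.1 y.2

variable [NeZero m] (p : SDist X (DeltaZSum m))

def mass (j : ZMod m) {n : ℕ} (x : X _⦋n⦌) : ℝ≥0 :=
  ∑ a : (DeltaZ m) _⦋n⦌, (p.d n x).toFun (DeltaZSum.mk j a)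

lemma apply_map_eq_sum_mk {k n : ℕ} (α : ⦋k⦌ ⟶ ⦋n⦌) (x : X _⦋n⦌) (j : ZMod m)
    (b : (DeltaZ m) _⦋k⦌) :
    (p.d k (X.map α.op x)).toFun (DeltaZSum.mk j b)
      = ∑ a with (DeltaZ m).map α.op a = b, (p.d n x).toFun (DeltaZSum.mk j a) := by
  rw [apply_map_eq_sum, DeltaZSum.sum_filter_map_eq]

lemma mass_map {k n : ℕ} (α : ⦋k⦌ ⟶ ⦋n⦌) (x : X _⦋n⦌) (j : ZMod m) :
    p.mass j (X.map α.op x) = p.mass j x := by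
  simp only [mass]
  simp_rw [apply_map_eq_sum_mk]
  exact Finset.sum_fiberwise _ _ _

lemma mass_eq_of_connected (hX : SConnected X) (j : ZMod m) {k n : ℕ} (x : X _⦋k⦌)
    (y : X _⦋n⦌) : p.mass j x = p.mass j y :=
  hX.eq_of_map_eq (fun _ x => p.mass j x) (fun α x => p.mass_map α x j) x y

lemma sum_mass {n : ℕ} (x : X _⦋n⦌) : ∑ j, p.mass j x = 1 :=
  (DeltaZSum.sum_eq _).symm.trans (p.d n x).sum_eq_one

lemma apply_le_mass {n : ℕ} (x : X _⦋n⦌) (j : ZMod m) (a : (DeltaZ m) _⦋n⦌) :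
    (p.d n x).toFun (DeltaZSum.mk j a) ≤ p.mass j x :=
  Finset.single_le_sum (f := fun a => (p.d n x).toFun (DeltaZSum.mk j a)) (fun _ _ => zero_le)
    (mem_univ a)

lemma mass_le_one {n : ℕ} (x : X _⦋n⦌) (j : ZMod m) : p.mass j x ≤ 1 :=
  p.sum_mass x ▸ Finset.single_le_sum (f := fun j => p.mass j x) (fun _ _ => zero_le) (mem_univ j)

lemma mass_eq_zero_of_mass_eq_one {n : ℕ} {x : X _⦋n⦌} {j i : ZMod m} (h : p.mass j x = 1)
    (hij : i ≠ j) : p.mass i x = 0 := by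
  have hsum := p.sum_mass x
  rw [← Finset.add_sum_erase _ _ (mem_univ j), h, add_eq_left] at hsum
  exact Finset.sum_eq_zero_iff.1 hsum i (mem_erase.2 ⟨hij, mem_univ i⟩)

lemma apply_eq_zero_of_mass_eq_zero {n : ℕ} {x : X _⦋n⦌} {j : ZMod m} (h : p.mass j x = 0)
    (a : (DeltaZ m) _⦋n⦌) : (p.d n x).toFun (DeltaZSum.mk j a) = 0 :=
  nonpos_iff_eq_zero.1 (h ▸ p.apply_le_mass x j a)

end SDist

noncomputable section Constructions

variable {m : ℕ} [NeZero m] {X : SSet.{0}}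

namespace SDist

def ofColorwise (f : ∀ n, X _⦋n⦌ → ZMod m → (DeltaZ m) _⦋n⦌ → ℝ≥0)
    (sum_eq_one : ∀ n x, ∑ j, ∑ a, f n x j a = 1)
    (map_eq : ∀ {k n : ℕ} (α : ⦋k⦌ ⟶ ⦋n⦌) (x : X _⦋n⦌) (j : ZMod m) (b : (DeltaZ m) _⦋k⦌),
      f k (X.map α.op x) j b = ∑ a with (DeltaZ m).map α.op a = b, f n x j a) :
    SDist X (DeltaZSum m) :=
  ofSum (fun n x y => f n x y.1 y.2) (fun n x => (DeltaZSum.sum_eq _).trans (sum_eq_one n x))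
    (fun {_ n} α x y => (map_eq α x y.1 y.2).trans
      (DeltaZSum.sum_filter_map_eq α (fun y => f n x y.1 y.2) y.1 y.2).symm)

variable (p : SDist X (DeltaZSum m))

def component (j : ZMod m) (lam : ℝ≥0) (hmass : ∀ n (x : X _⦋n⦌), p.mass j x = lam)
    (hlam : lam ≠ 0) : SDist X (DeltaZ m) :=
  ofSum (fun n x a => (p.d n x).toFun (DeltaZSum.mk j a) / lam)
    (fun n x => by rw [← Finset.sum_div, ← mass, hmass, div_self hlam])
    (fun α x b => by rw [apply_map_eq_sum_mk, Finset.sum_div])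

lemma component_apply {j : ZMod m} {lam : ℝ≥0} (hmass : ∀ n (x : X _⦋n⦌), p.mass j x = lam)
    (hlam : lam ≠ 0) {n : ℕ} (x : X _⦋n⦌) (a : (DeltaZ m) _⦋n⦌) :
    ((p.component j lam hmass hlam).d n x).toFun a = (p.d n x).toFun (DeltaZSum.mk j a) / lam :=
  rfl

def lift (j : ZMod m) (s : SDist X (DeltaZ m)) : SDist X (DeltaZSum m) :=
  ofColorwise (fun n x i a => if i = j then (s.d n x).toFun a else 0)
    (fun n x => by simp [(s.d n x).sum_eq_one])
    (fun α x i b => by split_ifs <;> simp [apply_map_eq_sum])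

lemma lift_apply (j : ZMod m) (s : SDist X (DeltaZ m)) {n : ℕ} (x : X _⦋n⦌) (i : ZMod m)
    (a : (DeltaZ m) _⦋n⦌) :
    ((lift j s).d n x).toFun (DeltaZSum.mk i a) = if i = j then (s.d n x).toFun a else 0 :=
  rfl

def reweight (w : ZMod m → ℝ≥0) (hw : ∀ n (x : X _⦋n⦌), ∑ j, w j * p.mass j x = 1) :
    SDist X (DeltaZSum m) :=
  ofColorwise (fun n x j a => w j * (p.d n x).toFun (DeltaZSum.mk j a))
    (fun n x => by simp only [← Finset.mul_sum]; exact hw n x)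
    (fun α x j b => by rw [apply_map_eq_sum_mk, Finset.mul_sum])

lemma reweight_apply (w : ZMod m → ℝ≥0) (hw : ∀ n (x : X _⦋n⦌), ∑ j, w j * p.mass j x = 1)
    {n : ℕ} (x : X _⦋n⦌) (j : ZMod m) (a : (DeltaZ m) _⦋n⦌) :
    ((p.reweight w hw).d n x).toFun (DeltaZSum.mk j a) = w j * (p.d n x).toFun (DeltaZSum.mk j a) :=
  rfl

lemma mass_reweight (w : ZMod m → ℝ≥0) (hw : ∀ n (x : X _⦋n⦌), ∑ j, w j * p.mass j x = 1)
    {n : ℕ} (x : X _⦋n⦌) (j : ZMod m) : (p.reweight w hw).mass j x = w j * p.mass j x := by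
  simp only [mass, reweight_apply, Finset.mul_sum]

lemma mass_lift (j : ZMod m) (s : SDist X (DeltaZ m)) {n : ℕ} (x : X _⦋n⦌) :
    (lift j s).mass j x = 1 := by
  simp [mass, lift_apply, (s.d n x).sum_eq_one]

lemma lift_injective (j : ZMod m) : Function.Injective (lift (X := X) j) := by
  intro s s' h
  refine ext fun n x a => ?_
  simpa [lift_apply] using congrArg (fun q => (q.d n x).toFun (DeltaZSum.mk j a)) h

lemma lift_component {j : ZMod m} {lam : ℝ≥0} (hmass : ∀ n (x : X _⦋n⦌), p.mass j x = lam)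
    (hlam : lam ≠ 0) (hlam₁ : lam = 1) : lift j (p.component j lam hmass hlam) = p := by
  refine ext_mk fun n x i a => ?_
  rw [lift_apply]
  split_ifs with hij
  · rw [hij, component_apply, hlam₁, div_one]
  · subst hlam₁
    exact (p.apply_eq_zero_of_mass_eq_zero (p.mass_eq_zero_of_mass_eq_one (hmass n x) hij) a).symm

end SDist

end Constructions

section Vertex

variable {m : ℕ} {X : SSet.{0}} {p q q' : SDist X (DeltaZSum m)} {t : ℝ}

lemma IsMix.of_mk
    (h : ∀ n (x : X _⦋n⦌) j a, ((p.d n x).toFun (DeltaZSum.mk j a) : ℝ)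
      = t * (q.d n x).toFun (DeltaZSum.mk j a) + (1 - t) * (q'.d n x).toFun (DeltaZSum.mk j a)) :
    IsMix t q q' p :=
  fun n x y => h n x y.1 y.2

variable [NeZero m]

lemma IsMix.mass (h : IsMix t q q' p) {n : ℕ} (x : X _⦋n⦌) (j : ZMod m) :
    (p.mass j x : ℝ) = t * q.mass j x + (1 - t) * q'.mass j x := by
  simp only [SDist.mass, NNReal.coe_sum, Finset.mul_sum, ← Finset.sum_add_distrib]
  exact Finset.sum_congr rfl fun a _ => h n x _

lemma IsMix.mass_eq_one (h : IsMix t q q' p) (ht₀ : 0 < t) (ht₁ : t < 1) {n : ℕ} {x : X _⦋n⦌}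
    {j : ZMod m} (hp : p.mass j x = 1) : q.mass j x = 1 ∧ q'.mass j x = 1 := by
  have hmix := h.mass x j
  have hq : (q.mass j x : ℝ) ≤ 1 := by exact_mod_cast q.mass_le_one x j
  have hq' : (q'.mass j x : ℝ) ≤ 1 := by exact_mod_cast q'.mass_le_one x j
  rw [hp, NNReal.coe_one] at hmix
  constructor
  · exact_mod_cast (by nlinarith : (q.mass j x : ℝ) = 1)
  · exact_mod_cast (by nlinarith : (q'.mass j x : ℝ) = 1)

lemma isVertex_lift_iff (j : ZMod m) (s : SDist X (DeltaZ m)) :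
    IsVertex (SDist.lift j s) ↔ IsVertex s := by
  constructor
  · intro hv r r' t ht₀ ht₁ hmix
    refine SDist.lift_injective j (hv _ _ t ht₀ ht₁ (IsMix.of_mk fun n x i a => ?_))
    simp only [SDist.lift_apply]
    split_ifs
    · exact hmix n x a
    · simp
  · intro hv q q' t ht₀ ht₁ (hmix : IsMix t q q' _)
    have hq := fun n (x : X _⦋n⦌) => (hmix.mass_eq_one ht₀ ht₁ (SDist.mass_lift j s x)).1
    have hq' := fun n (x : X _⦋n⦌) => (hmix.mass_eq_one ht₀ ht₁ (SDist.mass_lift j s x)).2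
    rw [← q.lift_component hq one_ne_zero rfl, ← q'.lift_component hq' one_ne_zero rfl]
    congr 1
    refine hv _ _ t ht₀ ht₁ fun n x a => ?_
    simpa [SDist.lift_apply, SDist.component_apply] using hmix n x (DeltaZSum.mk j a)

lemma not_isVertex_of_mass_lt_one (pt : X _⦋0⦌) {j : ZMod m} {lam : ℝ≥0}
    (hmass : ∀ n (x : X _⦋n⦌), p.mass j x = lam) (hlam₀ : 0 < lam) (hlam₁ : lam < 1) :
    ¬ IsVertex p := by
  set w : ZMod m → ℝ≥0 := fun i => if i = j then lam⁻¹ else 0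
  set w' : ZMod m → ℝ≥0 := fun i => if i = j then 0 else (1 - lam)⁻¹
  have hne : 1 - lam ≠ 0 := (tsub_pos_of_lt hlam₁).ne'
  have hw : ∀ n (x : X _⦋n⦌), ∑ i, w i * p.mass i x = 1 := fun n x => by
    simp [w, hmass n x, inv_mul_cancel₀ hlam₀.ne']
  have hw' : ∀ n (x : X _⦋n⦌), ∑ i, w' i * p.mass i x = 1 := fun n x => by
    have hrest : ∑ i ∈ univ.erase j, p.mass i x = 1 - lam :=
      eq_tsub_of_add_eq (by rw [← hmass n x, sum_erase_add _ _ (mem_univ j), p.sum_mass])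
    rw [← Finset.sum_erase univ (a := j) (by simp [w']),
      Finset.sum_congr rfl fun i hi => show w' i * _ = (1 - lam)⁻¹ * p.mass i x by
        simp [w', ne_of_mem_erase hi], ← Finset.mul_sum, hrest,
      inv_mul_cancel₀ hne]
  intro hv
  have hmix : IsMix lam (p.reweight w hw) (p.reweight w' hw') p := IsMix.of_mk fun n x i a => by
    have hlam : ((1 - lam : ℝ≥0) : ℝ) = 1 - lam := NNReal.coe_sub hlam₁.le
    have hlam' : (1 : ℝ) - lam ≠ 0 := by rw [← hlam]; exact_mod_cast hne
    by_cases hi : i = j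
    · simp [SDist.reweight_apply, w, w', hi, hlam₀.ne']
    · simp [SDist.reweight_apply, w, w', hi, hlam, hlam']
  have h := congrArg (fun q : SDist X (DeltaZSum m) => q.mass j pt)
    (hv _ _ lam (by exact_mod_cast hlam₀) (by exact_mod_cast hlam₁) hmix)
  simp [SDist.mass_reweight, w, w', hmass, hlam₀.ne'] at h

end Vertex

section Noncontextual

variable {m : ℕ} [NeZero m] {X : SSet.{0}} (p : SDist X (DeltaZSum m))

lemma noncontextual_component (hX : SConnected X) (pt : X _⦋0⦌) (hp : Noncontextual p)
    {j : ZMod m} {lam : ℝ≥0} (hmass : ∀ n (x : X _⦋n⦌), p.mass j x = lam) (hlam : lam ≠ 0) :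
    Noncontextual (p.component j lam hmass hlam) := by
  obtain ⟨Q, hQ⟩ := hp
  have hQ' : ∀ n (x : X _⦋n⦌) y,
      (p.d n x).toFun y = ∑ᶠ φ ∈ {φ | φ.app (op ⦋n⦌) x = y}, Q.toFun φ := hQ
  refine noncontextual_of_marginals _ pt (fun ψ => Q.toFun (ψ ≫ DeltaZSum.ι j) / lam) ?_
    fun n x a => ?_
  · refine (Q.finite_support.preimage (DeltaZSum.comp_ι_injective j).injOn).subset ?_
    exact (Function.support_div _ _).subset.trans Set.inter_subset_left
  · rw [SDist.component_apply, hQ', DeltaZSum.finsum_mem_app_eq_mk hX]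
    simp only [div_eq_mul_inv, finsum_mem_mul]

lemma noncontextual_of_components (hX : SConnected X) (pt : X _⦋0⦌) {lam : ZMod m → ℝ≥0}
    (hmass : ∀ j n (x : X _⦋n⦌), p.mass j x = lam j)
    (hcomp : ∀ j (hj : lam j ≠ 0), Noncontextual (p.component j (lam j) (hmass j) hj)) :
    Noncontextual p := by
  have hdec : ∀ j, ∃ g : (X ⟶ DeltaZ m) → ℝ≥0, (Function.support g).Finite ∧
      ∀ n (x : X _⦋n⦌) a,
        (p.d n x).toFun (DeltaZSum.mk j a) = ∑ᶠ ψ ∈ {ψ | ψ.app (op ⦋n⦌) x = a}, g ψ := by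
    intro j
    by_cases hj : lam j = 0
    · refine ⟨0, by simp, fun n x a => ?_⟩
      simp [p.apply_eq_zero_of_mass_eq_zero ((hmass j n x).trans hj)]
    · obtain ⟨Q, hQ⟩ := hcomp j hj
      have hQ' : ∀ n (x : X _⦋n⦌) a, ((p.component j (lam j) (hmass j) hj).d n x).toFun a
          = ∑ᶠ ψ ∈ {ψ | ψ.app (op ⦋n⦌) x = a}, Q.toFun ψ := hQ
      refine ⟨fun ψ => lam j * Q.toFun ψ,
        Q.finite_support.subset (Function.support_mul_subset_right ..), fun n x a => ?_⟩
      rw [← mul_finsum_mem, ← hQ', SDist.component_apply, mul_div_cancel₀ _ hj]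
  choose g hg hgp using hdec
  refine noncontextual_of_marginals p pt (fun φ => g (φ.app (op ⦋0⦌) pt).1 (φ ≫ DeltaZSum.π)) ?_
    fun n x y => ?_
  · refine (Set.finite_iUnion fun j => (hg j).image (· ≫ DeltaZSum.ι j)).subset fun φ hφ => ?_
    exact Set.mem_iUnion.2 ⟨_, φ ≫ DeltaZSum.π, hφ, (DeltaZSum.eq_comp_π_comp_ι hX φ pt).symm⟩
  · exact (hgp y.1 n x y.2).trans (DeltaZSum.finsum_mem_app_eq_mk hX
      (fun φ => g (φ.app (op ⦋0⦌) pt).1 (φ ≫ DeltaZSum.π)) y.1 x y.2).symm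

end Noncontextual

section Decomposition

variable {m : ℕ} [NeZero m] {X : SSet.{0}} (p : SDist X (DeltaZSum m)) {lam : ZMod m → ℝ≥0}
  {pc : (j : ZMod m) → lam j ≠ 0 → SDist X (DeltaZ m)}

lemma noncontextual_iff_forall_component (hX : SConnected X) (pt : X _⦋0⦌)
    (hmass : ∀ j n (x : X _⦋n⦌), p.mass j x = lam j)
    (hpc : ∀ j (hj : lam j ≠ 0) n (x : X _⦋n⦌) a,
      ((pc j hj).d n x).toFun a = (p.d n x).toFun (DeltaZSum.mk j a) / lam j) :
    Noncontextual p ↔ ∀ j (hj : lam j ≠ 0), Noncontextual (pc j hj) := by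
  have hpc' : ∀ j hj, pc j hj = p.component j (lam j) (hmass j) hj :=
    fun j hj => SDist.ext (hpc j hj)
  simp only [hpc']
  exact ⟨fun hp j hj => noncontextual_component p hX pt hp (hmass j) hj,
    noncontextual_of_components p hX pt hmass⟩

lemma isVertex_iff_exists_component (pt : X _⦋0⦌)
    (hmass : ∀ j n (x : X _⦋n⦌), p.mass j x = lam j)
    (hpc : ∀ j (hj : lam j ≠ 0) n (x : X _⦋n⦌) a,
      ((pc j hj).d n x).toFun a = (p.d n x).toFun (DeltaZSum.mk j a) / lam j) :
    IsVertex p ↔ ∃ (j : ZMod m) (_ : lam j = 1) (hj : lam j ≠ 0), IsVertex (pc j hj) := by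
  have hlift : ∀ j (hj₁ : lam j = 1) (hj : lam j ≠ 0), SDist.lift j (pc j hj) = p :=
    fun j hj₁ hj => (congrArg (SDist.lift j) (SDist.ext (hpc j hj))).trans
      (p.lift_component (hmass j) hj hj₁)
  constructor
  · intro hv
    obtain ⟨j, hj₁⟩ : ∃ j, lam j = 1 := by
      by_contra! hne
      obtain ⟨j, hj⟩ : ∃ j, lam j ≠ 0 := by
        by_contra! h0
        simpa [hmass, h0] using p.sum_mass pt
      have hle : lam j ≤ 1 := hmass j 0 pt ▸ p.mass_le_one pt j
      exact not_isVertex_of_mass_lt_one pt (hmass j) (pos_iff_ne_zero.2 hj)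
        (hle.lt_of_ne (hne j)) hv
    have hj : lam j ≠ 0 := hj₁ ▸ one_ne_zero
    exact ⟨j, hj₁, hj, (isVertex_lift_iff j _).1 (hlift j hj₁ hj ▸ hv)⟩
  · rintro ⟨j, hj₁, hj, hv⟩
    exact hlift j hj₁ hj ▸ (isVertex_lift_iff j _).2 hv

end Decomposition

/-- Theorem 4.7 (Theorem 1.1) of the paper, via the identification of simplicial
distributions on the cone scenario `(CX, Δ_{ℤ_m})` with those on `(X, ⊔_{ℤ_m} Δ_{ℤ_m})`:
a simplicial distribution `p` on `(X, ⊔_{ℤ_m} Δ_{ℤ_m})` decomposes into masses `λ_j` and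
components `p^{(j)}`; `p` is noncontextual iff all components are, and `p` is a vertex iff
some `λ_j = 1` and `p^{(j)}` is a vertex. -/
theorem stmt0 (m : ℕ) [NeZero m] (X : SSet.{0}) (hX : SConnected X)
    (p : SDist X (DeltaZSum m)) :
    ∃ lam : ZMod m → ℝ≥0,
      (∀ (j : ZMod m) (n : ℕ) (x : X _⦋n⦌),
        ∑ᶠ a : Fin (n + 1) → ZMod m, (p.d n x).toFun (j, a) = lam j) ∧
      (∑ j : ZMod m, lam j = 1) ∧
      (∀ j : ZMod m, lam j ≠ 0 → ∃ pj : SDist X (DeltaZ m),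
        ∀ (n : ℕ) (x : X _⦋n⦌) (a : Fin (n + 1) → ZMod m),
          (pj.d n x).toFun a = (p.d n x).toFun (j, a) / lam j) ∧
      (∀ pc : (j : ZMod m) → lam j ≠ 0 → SDist X (DeltaZ m),
        (∀ (j : ZMod m) (hj : lam j ≠ 0) (n : ℕ) (x : X _⦋n⦌) (a : Fin (n + 1) → ZMod m),
          ((pc j hj).d n x).toFun a = (p.d n x).toFun (j, a) / lam j) →
        ((Noncontextual p ↔ ∀ (j : ZMod m) (hj : lam j ≠ 0), Noncontextual (pc j hj)) ∧
         (IsVertex p ↔ ∃ (j : ZMod m) (_ : lam j = 1) (hj : lam j ≠ 0),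
            IsVertex (pc j hj)))) := by
  by_cases hX₀ : X.Nonempty
  · obtain ⟨pt⟩ := hX₀
    have hmass : ∀ j n (x : X _⦋n⦌), p.mass j x = p.mass j pt :=
      fun j n x => p.mass_eq_of_connected hX j x pt
    refine ⟨fun j => p.mass j pt, fun j n x => (finsum_eq_sum_of_fintype _).trans (hmass j n x),
      p.sum_mass pt, fun j hj => ⟨p.component j _ (hmass j) hj, fun _ _ _ => rfl⟩,
      fun pc hpc => ⟨noncontextual_iff_forall_component p hX pt hmass hpc,
        isVertex_iff_exists_component p pt hmass hpc⟩⟩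
  · -- `X` is empty: any `lam` summing to `1` works, and `Pi.single 0 1` also supplies the colour
    -- with `lam j = 1` required by the vertex clause.
    have := isEmpty_of_not_nonempty hX₀
    refine ⟨Pi.single 0 1, fun j n x => isEmptyElim x, by simp,
      fun j hj => ⟨p.component j _ (fun n x => isEmptyElim x) hj, fun _ _ _ => rfl⟩,
      fun pc hpc => ⟨iff_of_true (noncontextual_of_not_nonempty hX₀ p)
        fun j hj => noncontextual_of_not_nonempty hX₀ _, iff_of_true (isVertex_of_not_nonempty hX₀ p)
        ⟨0, by simp, by simp, isVertex_of_not_nonempty hX₀ _⟩⟩⟩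
end

section
/- Let m be a positive integer, let V i (for i ∈ Fin m) be real vector spaces, and let A i ⊆ V i be nonempty convex sets. Let J ⊆ (Fin m → ℝ) × (Π i, V i) be the set of pairs (w,u) such that w i ≥ 0 for all i, Σ_i w i = 1, and u i ∈ w i • A i for every i. Then J is convex, and the extreme points of J are exactly the pairs (w,u) for which there is an index j with w j = 1, w i = 0 for all i ≠ j, u j an extreme point of A j, and u i = 0 for all i ≠ j. (J is the concrete realization of the join A₁ ⋆ ⋯ ⋆ A_m, the coproduct of the A i in the category of convex sets; the proposition says the vertices of a join are exactly the images of the vertices of its factors.) -/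
open scoped BigOperators Pointwise

/-- The concrete realization of the join `A₁ ⋆ ⋯ ⋆ A_m` of convex sets: pairs `(w, u)` of a
weight vector `w` and a tuple `u` with `u i ∈ w i • A i` for every `i`. -/
def JoinSet {m : ℕ} (V : Fin m → Type*) [∀ i, AddCommGroup (V i)] [∀ i, Module ℝ (V i)]
    (A : ∀ i, Set (V i)) : Set ((Fin m → ℝ) × (∀ i, V i)) :=
  {wu | (∀ i, 0 ≤ wu.1 i) ∧ (∑ i, wu.1 i = 1) ∧ ∀ i, wu.2 i ∈ wu.1 i • A i}

/-!
The weight projection `(w, u) ↦ w` sends extreme points of the join to vertices `Pi.single j 1`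
of the standard simplex: writing `u i = w i • a i` with `a i ∈ A i`, any splitting of `w` inside
the simplex lifts to a splitting of `(w, u)` inside the join. The points of the join over the
vertex `Pi.single j 1` form the face on which the linear functional `(w, u) ↦ w j` attains its
maximum `1`, and this face is the product `{Pi.single j 1} × (A j in slot j, {0} elsewhere)`,
whose extreme points are computed factor by factor.
-/

open Set Function

section General

variable {𝕜 : Type*} [Field 𝕜] [LinearOrder 𝕜] [IsStrictOrderedRing 𝕜]

theorem isExtreme_setOf_eq_of_forall_le {E : Type*} [AddCommGroup E] [Module 𝕜 E]
    {S : Set E} (l : E →ₗ[𝕜] 𝕜) {c : 𝕜} (hle : ∀ x ∈ S, l x ≤ c) :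
    IsExtreme 𝕜 S {x ∈ S | l x = c} := by
  refine ⟨sep_subset _ _, ?_⟩
  rintro x₁ hx₁ x₂ hx₂ x ⟨-, hx⟩ ⟨a, b, ha, hb, hab, rfl⟩
  refine ⟨hx₁, ?_⟩
  have h₁ := hle x₁ hx₁
  have h₂ := hle x₂ hx₂
  rw [map_add, map_smul, map_smul, smul_eq_mul, smul_eq_mul] at hx
  obtain rfl : b = 1 - a := by linarith
  by_contra hne
  nlinarith [mul_lt_mul_of_pos_left (lt_of_le_of_ne h₁ hne) ha,
    mul_le_mul_of_nonneg_left h₂ hb.le]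

theorem extremePoints_stdSimplex_subset {ι : Type*} [Fintype ι] [DecidableEq ι] :
    extremePoints 𝕜 (stdSimplex 𝕜 ι) ⊆ range fun i => Pi.single i 1 := by
  rw [← convexHull_rangle_single_eq_stdSimplex]
  exact extremePoints_convexHull_subset

theorem eq_single_of_mem_stdSimplex_of_apply_eq_one {ι : Type*} [Fintype ι] [DecidableEq ι]
    {w : ι → 𝕜} (hw : w ∈ stdSimplex 𝕜 ι) {j : ι} (hj : w j = 1) :
    w = Pi.single j 1 := by
  have hrest : ∑ i ∈ Finset.univ.erase j, w i = 0 := by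
    linarith [Finset.add_sum_erase Finset.univ w (Finset.mem_univ j), hw.2]
  rw [Finset.sum_eq_zero_iff_of_nonneg fun i _ => hw.1 i] at hrest
  ext i
  rcases eq_or_ne i j with rfl | hij
  · simp [hj]
  · simp [hij, hrest i (Finset.mem_erase.2 ⟨hij, Finset.mem_univ i⟩)]

end General

theorem Pi.single_one_smul_set {R ι : Type*} [Semiring R] [DecidableEq ι] {V : ι → Type*}
    [∀ i, AddCommMonoid (V i)] [∀ i, Module R (V i)] {A : ∀ i, Set (V i)}
    (hA : ∀ i, (A i).Nonempty) (j i : ι) :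
    (Pi.single j 1 : ι → R) i • A i = update (fun i => ({0} : Set (V i))) j (A j) i := by
  rcases eq_or_ne i j with rfl | hij
  · simp
  · simp [hij, zero_smul_set (hA i), ← Set.singleton_zero]

section Join

variable {m : ℕ} {V : Fin m → Type*} [∀ i, AddCommGroup (V i)] [∀ i, Module ℝ (V i)]
  {A : ∀ i, Set (V i)}

theorem convex_joinSet (hA : ∀ i, Convex ℝ (A i)) : Convex ℝ (JoinSet V A) := by
  rintro ⟨w, u⟩ ⟨hw₀, hw₁, hwu⟩ ⟨v, t⟩ ⟨hv₀, hv₁, hvt⟩ a b ha hb hab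
  have hsimplex := convex_stdSimplex ℝ (Fin m) ⟨hw₀, hw₁⟩ ⟨hv₀, hv₁⟩ ha hb hab
  refine ⟨hsimplex.1, hsimplex.2, fun i => ?_⟩
  simp only [Prod.fst_add, Prod.snd_add, Prod.smul_fst, Prod.smul_snd, Pi.add_apply,
    Pi.smul_apply, smul_eq_mul]
  rw [(hA i).add_smul (mul_nonneg ha (hw₀ i)) (mul_nonneg hb (hv₀ i)), mul_smul, mul_smul]
  exact add_mem_add (smul_mem_smul_set (hwu i)) (smul_mem_smul_set (hvt i))

theorem fst_mem_extremePoints_stdSimplex {x : (Fin m → ℝ) × (∀ i, V i)}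
    (hx : x ∈ extremePoints ℝ (JoinSet V A)) :
    x.1 ∈ extremePoints ℝ (stdSimplex ℝ (Fin m)) := by
  obtain ⟨⟨hw₀, hw₁, hwu⟩, hext⟩ := hx
  choose a ha hau using fun i => mem_smul_set.1 (hwu i)
  set lift := fun w : Fin m → ℝ => (w, fun i => w i • a i)
  have hlift : ∀ w ∈ stdSimplex ℝ (Fin m), lift w ∈ JoinSet V A := fun w hw =>
    ⟨hw.1, hw.2, fun i => smul_mem_smul_set (ha i)⟩
  refine ⟨⟨hw₀, hw₁⟩, fun w₁ hw₁ w₂ hw₂ ⟨c, d, hc, hd, hcd, hw⟩ => ?_⟩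
  have hsplit : x = c • lift w₁ + d • lift w₂ := by
    ext i
    · simp [lift, ← hw]
    · simp [lift, ← hau, ← hw, smul_smul, add_smul]
  exact congrArg Prod.fst
    (hext (hlift w₁ hw₁) (hlift w₂ hw₂) ⟨c, d, hc, hd, hcd, hsplit.symm⟩)

theorem isExtreme_joinSet_sep_fst_eq_one (j : Fin m) :
    IsExtreme ℝ (JoinSet V A) {x ∈ JoinSet V A | x.1 j = 1} :=
  isExtreme_setOf_eq_of_forall_le (S := JoinSet V A)
    ((LinearMap.proj j).comp (LinearMap.fst ℝ _ _))
    fun _ hx => (mem_Icc_of_mem_stdSimplex ⟨hx.1, hx.2.1⟩ j).2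

theorem joinSet_sep_fst_eq_one (hA : ∀ i, (A i).Nonempty) (j : Fin m) :
    {x ∈ JoinSet V A | x.1 j = 1} =
      {(Pi.single j 1 : Fin m → ℝ)} ×ˢ
        univ.pi (update (fun i => ({0} : Set (V i))) j (A j)) := by
  ext ⟨w, u⟩
  simp only [mem_sep_iff, mem_prod, mem_singleton_iff, mem_univ_pi,
    ← Pi.single_one_smul_set (R := ℝ) hA j]
  constructor
  · rintro ⟨⟨hw₀, hw₁, hwu⟩, hj⟩
    obtain rfl := eq_single_of_mem_stdSimplex_of_apply_eq_one ⟨hw₀, hw₁⟩ hj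
    exact ⟨rfl, hwu⟩
  · rintro ⟨rfl, hu⟩
    exact ⟨⟨(single_mem_stdSimplex ℝ j).1, (single_mem_stdSimplex ℝ j).2, hu⟩,
      Pi.single_eq_same j 1⟩

theorem extremePoints_joinSet_sep_fst_eq_one (hA : ∀ i, (A i).Nonempty) (j : Fin m) :
    extremePoints ℝ {x ∈ JoinSet V A | x.1 j = 1} =
      {(Pi.single j 1 : Fin m → ℝ)} ×ˢ
        univ.pi (update (fun i => ({0} : Set (V i))) j (extremePoints ℝ (A j))) := by
  rw [joinSet_sep_fst_eq_one hA, extremePoints_prod, extremePoints_singleton, extremePoints_pi]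
  congr 2
  funext i
  rw [apply_update (fun i => extremePoints ℝ (E := V i))]
  simp only [extremePoints_singleton]

theorem extremePoints_joinSet (hA : ∀ i, (A i).Nonempty) :
    extremePoints ℝ (JoinSet V A) =
      ⋃ j, {(Pi.single j 1 : Fin m → ℝ)} ×ˢ
        univ.pi (update (fun i => ({0} : Set (V i))) j (extremePoints ℝ (A j))) := by
  ext x
  simp only [mem_iUnion, ← extremePoints_joinSet_sep_fst_eq_one hA]
  constructor
  · intro hx
    obtain ⟨j, hj⟩ := extremePoints_stdSimplex_subset (fst_mem_extremePoints_stdSimplex hx)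
    have hface : x ∈ {x ∈ JoinSet V A | x.1 j = 1} := ⟨hx.1, by simp [← hj]⟩
    refine ⟨j, ?_⟩
    rw [(isExtreme_joinSet_sep_fst_eq_one j).extremePoints_eq]
    exact ⟨hface, hx⟩
  · rintro ⟨j, hj⟩
    exact (isExtreme_joinSet_sep_fst_eq_one (A := A) j).extremePoints_subset_extremePoints hj

end Join

theorem stmt1_general (m : ℕ) (V : Fin m → Type*)
    [∀ i, AddCommGroup (V i)] [∀ i, Module ℝ (V i)]
    (A : ∀ i, Set (V i)) (hA : ∀ i, (A i).Nonempty) (hAconv : ∀ i, Convex ℝ (A i)) :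
    Convex ℝ (JoinSet V A) ∧
    Set.extremePoints ℝ (JoinSet V A) =
      {wu | ∃ j : Fin m, wu.1 j = 1 ∧ (∀ i, i ≠ j → wu.1 i = 0) ∧
        wu.2 j ∈ Set.extremePoints ℝ (A j) ∧ ∀ i, i ≠ j → wu.2 i = 0} := by
  refine ⟨convex_joinSet hAconv, ?_⟩
  ext ⟨w, u⟩
  simp only [extremePoints_joinSet hA, mem_iUnion, mem_prod, mem_singleton_iff, mem_univ_pi,
    mem_ofPred_eq, Pi.single, eq_update_iff, forall_update_iff _ fun i s => u i ∈ s,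
    Pi.zero_apply, and_assoc]

/-- Proposition 3.3: the join of nonempty convex sets is convex, and its extreme points
(vertices) are exactly the images of the extreme points of the factors under the structure
maps `κ_j`. -/
theorem stmt1 (m : ℕ) (hm : 0 < m) (V : Fin m → Type*)
    [∀ i, AddCommGroup (V i)] [∀ i, Module ℝ (V i)]
    (A : ∀ i, Set (V i)) (hA : ∀ i, (A i).Nonempty) (hAconv : ∀ i, Convex ℝ (A i)) :
    Convex ℝ (JoinSet V A) ∧
    Set.extremePoints ℝ (JoinSet V A) =
      {wu | ∃ j : Fin m, wu.1 j = 1 ∧ (∀ i, i ≠ j → wu.1 i = 0) ∧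
        wu.2 j ∈ Set.extremePoints ℝ (A j) ∧ ∀ i, i ≠ j → wu.2 i = 0} :=
  stmt1_general m V A hA hAconv
end

section
/- Let f : E ⟶ X be a bundle scenario with X connected, F a summand of E, and p a simplicial distribution on f. Then for any two simplices x ∈ X_n and x' ∈ X_k, Σ_{e ∈ F_n} p_x(e) = Σ_{e ∈ F_k} p_{x'}(e). -/
/-!
The mass that `p` puts on the summand `F` is invariant under every structure map `α`: compatibility
writes `p` at `X(α) x` as the pushforward of `p` at `x` along `E(α)`, and `E(α)⁻¹ F_k = F_n`
because both `F` and its complement are closed. A function on simplices invariant under the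
structure maps is constant when `X` is connected: it agrees at the two ends of every edge, hence on
all vertices, and every simplex has a vertex as a face.
-/

open CategoryTheory Simplicial Opposite
open scoped NNReal BigOperators

universe u

/-- `f : E ⟶ X` is a bundle scenario if it is surjective in each degree. -/
def IsBundle {E X : SSet.{u}} (f : E ⟶ X) : Prop :=
  ∀ n : ℕ, Function.Surjective (f.app (op ⦋n⦌))

/-- A simplicial distribution on a simplicial map `f : E ⟶ X`. -/
structure BDist {E X : SSet.{u}} (f : E ⟶ X) : Type u where
  d : ∀ n : ℕ, X _⦋n⦌ → FDist (E _⦋n⦌)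
  supp : ∀ (n : ℕ) (x : X _⦋n⦌) (e : E _⦋n⦌), f.app (op ⦋n⦌) e ≠ x → (d n x).toFun e = 0
  compat : ∀ {k n : ℕ} (α : (⦋k⦌ : SimplexCategory) ⟶ ⦋n⦌) (x : X _⦋n⦌) (e : E _⦋k⦌),
    (d k (X.map α.op x)).toFun e = ∑ᶠ e' ∈ {e' : E _⦋n⦌ | E.map α.op e' = e}, (d n x).toFun e'

/-- A family of levelwise subsets closed under the structure maps. -/
def ClosedUnder (E : SSet.{u}) (F : ∀ n : ℕ, Set (E _⦋n⦌)) : Prop :=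
  ∀ ⦃k n : ℕ⦄ (α : (⦋k⦌ : SimplexCategory) ⟶ ⦋n⦌) (e : E _⦋n⦌), e ∈ F n → E.map α.op e ∈ F k

/-- A summand of a simplicial set: the family and its levelwise complement are both closed
under the structure maps. -/
def IsSummand (E : SSet.{u}) (F : ∀ n : ℕ, Set (E _⦋n⦌)) : Prop :=
  ClosedUnder E F ∧ ClosedUnder E fun n => (F n)ᶜ

/-- The sub-simplicial set spanned by a closed family of levelwise subsets. -/
def SubSSet (E : SSet.{u}) (F : ∀ n : ℕ, Set (E _⦋n⦌)) (hF : ClosedUnder E F) : SSet.{u} where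
  obj U := {e : E.obj U // e ∈ F U.unop.len}
  map {U V} α := TypeCat.ofHom fun e => ⟨E.map α e.1, hF (k := V.unop.len) (n := U.unop.len) α.unop e.1 e.2⟩
  map_id U := by
    ext e
    exact ConcreteCategory.congr_hom (E.map_id U) e.1
  map_comp α β := by
    ext e
    exact ConcreteCategory.congr_hom (E.map_comp α β) e.1

/-- The inclusion of a sub-simplicial set. -/
def subIncl (E : SSet.{u}) (F : ∀ n : ℕ, Set (E _⦋n⦌)) (hF : ClosedUnder E F) :
    SubSSet E F hF ⟶ E where
  app U := TypeCat.ofHom fun e => e.1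
  naturality := by intros; rfl

/-- The sections of a simplicial map `f : E ⟶ X`. -/
def Sections {E X : SSet.{u}} (f : E ⟶ X) : Type u :=
  {s : X ⟶ E // s ≫ f = 𝟙 X}

/-- A simplicial distribution on a bundle is noncontextual if it is a mixture of
(deterministic distributions associated with) sections of the bundle. -/
def BNoncontextual {E X : SSet.{u}} {f : E ⟶ X} (p : BDist f) : Prop :=
  ∃ Q : FDist (Sections f), ∀ (n : ℕ) (x : X _⦋n⦌) (e : E _⦋n⦌),
    (p.d n x).toFun e = ∑ᶠ s ∈ ({s | s.1.app (op ⦋n⦌) x = e} : Set (Sections f)), Q.toFun s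

/-- A vertex (extreme point) of the convex set of simplicial distributions on a bundle. -/
def BIsVertex {E X : SSet.{u}} {f : E ⟶ X} (p : BDist f) : Prop :=
  ∀ (q q' : BDist f) (t : ℝ), 0 < t → t < 1 →
    (∀ (n : ℕ) (x : X _⦋n⦌) (e : E _⦋n⦌),
      ((p.d n x).toFun e : ℝ) = t * ((q.d n x).toFun e : ℝ) + (1 - t) * ((q'.d n x).toFun e : ℝ)) →
    q = q'

open Function Set in
theorem finsum_mem_fiberwise {α β M : Type*} [AddCommMonoid M] {g : α → M}
    (hg : (support g).Finite) (φ : α → β) (T : Set β) :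
    ∑ᶠ b ∈ T, ∑ᶠ a ∈ {a | φ a = b}, g a = ∑ᶠ a ∈ φ ⁻¹' T, g a := by
  have hfiber_zero : ∀ b ∉ φ '' support g, ∑ᶠ a ∈ {a | φ a = b}, g a = 0 := fun b hb =>
    finsum_mem_of_eqOn_zero fun a ha => by_contra fun hga => hb ⟨a, hga, ha⟩
  have hunion : ⋃ b ∈ T ∩ φ '' support g, {a | φ a = b} ∩ support g = φ ⁻¹' T ∩ support g := by
    ext a
    simp only [mem_iUnion, mem_inter_iff, mem_image, mem_ofPred_eq, mem_preimage, exists_prop]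
    exact ⟨fun ⟨_, ⟨hbT, _⟩, rfl, ha⟩ => ⟨hbT, ha⟩, fun ⟨haT, ha⟩ => ⟨_, ⟨haT, a, ha, rfl⟩, rfl, ha⟩⟩
  calc ∑ᶠ b ∈ T, ∑ᶠ a ∈ {a | φ a = b}, g a
      = ∑ᶠ b ∈ T ∩ φ '' support g, ∑ᶠ a ∈ {a | φ a = b} ∩ support g, g a := by
        refine finsum_mem_inter_support_eq' _ _ _ (fun b hb => ?_) |>.trans
          (finsum_mem_congr rfl fun b _ => (finsum_mem_inter_support g _).symm)
        exact ⟨fun hbT => ⟨hbT, not_not.1 (mt (hfiber_zero b) hb)⟩, And.left⟩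
    _ = ∑ᶠ a ∈ ⋃ b ∈ T ∩ φ '' support g, {a | φ a = b} ∩ support g, g a :=
        (finsum_mem_biUnion
          (fun b _ b' _ hbb' => disjoint_left.2 fun a ha ha' => hbb' (ha.1.symm.trans ha'.1))
          ((hg.image φ).inter_of_right T) fun _ _ => hg.inter_of_right _).symm
    _ = ∑ᶠ a ∈ φ ⁻¹' T ∩ support g, g a := by rw [hunion]
    _ = ∑ᶠ a ∈ φ ⁻¹' T, g a := finsum_mem_inter_support g _

theorem IsSummand.preimage_map_eq {E : SSet.{u}} {F : ∀ n : ℕ, Set (E _⦋n⦌)}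
    (hF : IsSummand E F) {k n : ℕ} (α : (⦋k⦌ : SimplexCategory) ⟶ ⦋n⦌) :
    E.map α.op ⁻¹' F k = F n :=
  Set.ext fun e => ⟨fun he => by_contra fun he' => hF.2 α e he' he, hF.1 α e⟩

theorem BDist.finsum_mem_map_of_isSummand {E X : SSet.{u}} {f : E ⟶ X} (p : BDist f)
    {F : ∀ n : ℕ, Set (E _⦋n⦌)} (hF : IsSummand E F) {k n : ℕ}
    (α : (⦋k⦌ : SimplexCategory) ⟶ ⦋n⦌) (x : X _⦋n⦌) :
    ∑ᶠ e ∈ F k, (p.d k (X.map α.op x)).toFun e = ∑ᶠ e ∈ F n, (p.d n x).toFun e := by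
  simp_rw [p.compat]
  rw [finsum_mem_fiberwise (p.d n x).finite_support, hF.preimage_map_eq]

theorem SConnected.eq_of_map_invariant {X : SSet.{u}} (hX : SConnected X) {β : Sort*}
    (m : ∀ n : ℕ, X _⦋n⦌ → β)
    (hm : ∀ {k n : ℕ} (α : (⦋k⦌ : SimplexCategory) ⟶ ⦋n⦌) (x : X _⦋n⦌), m k (X.map α.op x) = m n x)
    {n k : ℕ} (x : X _⦋n⦌) (x' : X _⦋k⦌) : m n x = m k x' := by
  have hedge : ∀ a b, EdgeRel X a b → m 0 a = m 0 b := by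
    rintro _ _ ⟨σ, rfl, rfl⟩
    exact (hm (SimplexCategory.δ 1) σ).trans (hm (SimplexCategory.δ 0) σ).symm
  have hvertex : ∀ a b, m 0 a = m 0 b := fun a b =>
    Relation.EqvGen.rec (motive := fun a b _ => m 0 a = m 0 b) hedge (fun _ => rfl)
      (fun _ _ _ ih => ih.symm) (fun _ _ _ _ _ ih₁ ih₂ => ih₁.trans ih₂) (hX a b)
  calc m n x = m 0 (X.map (SimplexCategory.const ⦋0⦌ ⦋n⦌ 0).op x) := (hm _ x).symm
    _ = m 0 (X.map (SimplexCategory.const ⦋0⦌ ⦋k⦌ 0).op x') := hvertex _ _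
    _ = m k x' := hm _ x'

theorem stmt4_general {E X : SSet.{0}} (f : E ⟶ X) (hX : SConnected X)
    (F : ∀ n : ℕ, Set (E _⦋n⦌)) (hF : IsSummand E F) (p : BDist f)
    (n k : ℕ) (x : X _⦋n⦌) (x' : X _⦋k⦌) :
    ∑ᶠ e ∈ F n, (p.d n x).toFun e = ∑ᶠ e ∈ F k, (p.d k x').toFun e :=
  hX.eq_of_map_invariant (fun j y => ∑ᶠ e ∈ F j, (p.d j y).toFun e)
    (p.finsum_mem_map_of_isSummand hF) x x'

/-- Lemma 3.11: for a bundle scenario over a connected measurement space, the total mass of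
a simplicial distribution in a summand `F` of the event space does not depend on the
simplex. -/
theorem stmt4 {E X : SSet.{0}} (f : E ⟶ X) (hf : IsBundle f) (hX : SConnected X)
    (F : ∀ n : ℕ, Set (E _⦋n⦌)) (hF : IsSummand E F) (p : BDist f)
    (n k : ℕ) (x : X _⦋n⦌) (x' : X _⦋k⦌) :
    ∑ᶠ e ∈ F n, (p.d n x).toFun e = ∑ᶠ e ∈ F k, (p.d k x').toFun e :=
  stmt4_general f hX F hF p n k x x'
end

section
/- For every small category C there is an isomorphism of simplicial sets between the nerve of the category Σ_{A ∈ C} Under(A) (the sigma category over the objects A of C of the under-categories; this is the décalage category Dec⁰(C), whose objects are the morphisms of C and whose morphisms f → g ∘ f are given by postcomposition) and Dec⁰(N C), the décalage of the nerve of C. The isomorphism sends an n-simplex of the nerve of Σ_{A ∈ C} Under(A) — a chain (A → B₀) → (A → B₁) → ⋯ → (A → B_n) of objects under a fixed A, with connecting morphisms h_t : B_{t−1} → B_t — to the composable chain A → B₀ → B₁ → ⋯ → B_n, an (n+1)-simplex of N C; these isomorphisms are natural in C. -/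
open CategoryTheory Simplicial Opposite

universe u

/-- The morphism `σ(α) : [k+1] ⟶ [n+1]` with `σ(α)(0) = 0` and `σ(α)(i+1) = α(i) + 1`,
used to define the décalage. -/
def coneHom {a b : SimplexCategory} (α : a ⟶ b) :
    (⦋a.len + 1⦌ : SimplexCategory) ⟶ ⦋b.len + 1⦌ :=
  SimplexCategory.Hom.mk
    { toFun := Fin.cases 0 fun i => (α.toOrderHom i).succ
      monotone' := by
        intro x y hxy
        induction x using Fin.cases with
        | zero => simp only [Fin.cases_zero]; exact Fin.zero_le _
        | succ i =>
          induction y using Fin.cases with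
          | zero => exact absurd (Fin.le_zero_iff.mp hxy) (Fin.succ_ne_zero i)
          | succ j =>
            simp only [Fin.cases_succ]
            exact Fin.succ_le_succ_iff.mpr
              (α.toOrderHom.monotone (Fin.succ_le_succ_iff.mp hxy)) }

lemma coneHom_id (a : SimplexCategory) :
    coneHom (𝟙 a) = 𝟙 (⦋a.len + 1⦌ : SimplexCategory) := by
  apply SimplexCategory.Hom.ext
  ext i
  induction i using Fin.cases with
  | zero => simp [coneHom]
  | succ i => simp [coneHom]

lemma coneHom_comp {a b c : SimplexCategory} (α : a ⟶ b) (β : b ⟶ c) :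
    coneHom (α ≫ β) = coneHom α ≫ coneHom β := by
  apply SimplexCategory.Hom.ext
  ext i
  induction i using Fin.cases with
  | zero => simp [coneHom]; rfl
  | succ i => simp [coneHom]; rfl

/-- The décalage of a simplicial set: `Dec⁰(Y)_n = Y_{n+1}`, with `α : [k] ⟶ [n]` acting
as `Y(σ(α))`. -/
def Dec0 (Y : SSet.{u}) : SSet.{u} where
  obj U := Y.obj (op ⦋U.unop.len + 1⦌)
  map α := Y.map (coneHom α.unop).op
  map_id U := by
    show Y.map (coneHom (𝟙 U.unop)).op = _
    rw [coneHom_id, op_id, Y.map_id]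
  map_comp {U V W} α β := by
    show Y.map (coneHom (β.unop ≫ α.unop)).op = _
    rw [coneHom_comp, op_comp, Y.map_comp]

/-- Functoriality of the décalage. -/
def Dec0map {Y Z : SSet.{u}} (g : Y ⟶ Z) : Dec0 Y ⟶ Dec0 Z where
  app U := g.app (op ⦋U.unop.len + 1⦌)
  naturality U V α := g.naturality (coneHom α.unop).op

/-- The map of nerves induced by a functor. -/
def nerveMap {C D : Type u} [SmallCategory C] [SmallCategory D] (G : C ⥤ D) :
    nerve C ⟶ nerve D where
  app U := ↾fun s => s ⋙ G
  naturality U V α := rfl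

/-- The functor `Σ_{A ∈ C} Under(A) ⥤ C` remembering the target object. -/
def underRight (C : Type u) [SmallCategory C] : (Σ A : C, Under A) ⥤ C :=
  CategoryTheory.Sigma.desc fun A => Under.forget A

/-- The functor between sigma categories of under-categories induced by a functor. -/
def sigmaUnderMap {C D : Type u} [SmallCategory C] [SmallCategory D] (G : C ⥤ D) :
    (Σ A : C, Under A) ⥤ Σ A : D, Under A :=
  CategoryTheory.Sigma.desc fun A => Under.post G ⋙ CategoryTheory.Sigma.incl (G.obj A)


/-- An `n`-simplex of `Dec⁰(N C)` is an `(n+1)`-simplex of `N C`, i.e. a composable chain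
of `n+1` morphisms in `C`. -/
def toChain {C : Type u} [SmallCategory C] {n : ℕ} (t : (Dec0 (nerve C)).obj (op ⦋n⦌)) :
    ComposableArrows C (n + 1) := t

/-!
An `(n+1)`-chain `A → B₀ → ⋯ → B_n` in `C` gives the chain `(A → B₀) → ⋯ → (A → B_n)` in
`Under A` by composing the first arrow with the others. Conversely, a chain in `Σ A, Under A`
stays in one fibre, and prepending the structure map of its first object to its image in `C`
gives back an `(n+1)`-chain. Since `Σ A, Under A ⥤ C` is faithful and the target of a
morphism `g` out of `(A, f)` is `(A, f ≫ g)`, these constructions are mutually inverse. Both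
commute definitionally with the simplicial operators and with functors `C ⥤ D`.
-/

namespace CategoryTheory.Sigma

variable {C : Type u} [SmallCategory C]

instance : (underRight C).Faithful where
  map_injective {X Y} f g h := by
    change SigmaHom X Y at f g
    cases f with
    | mk f =>
      cases g with
      | mk g => exact congrArg SigmaHom.mk ((Under.forget _).map_injective h)

lemma eq_mk_comp_underRight_map {X Y : Σ A : C, Under A} (g : X ⟶ Y) :
    Y = ⟨X.1, Under.mk (X.2.hom ≫ (underRight C).map g)⟩ := by
  change SigmaHom X Y at g
  cases g with
  | mk f =>
    show _ = (⟨_, Under.mk (_ ≫ f.right)⟩ : Σ A : C, Under A)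
    rw [Under.w f]
    exact congrArg _ (StructuredArrow.eq_mk _)

lemma hom_heq_of_underRight_map_heq {X Y X' Y' : Σ A : C, Under A} (hX : X = X') (hY : Y = Y')
    {g : X ⟶ Y} {g' : X' ⟶ Y'} (h : (underRight C).map g ≍ (underRight C).map g') :
    g ≍ g' := by
  subst hX hY
  exact heq_of_eq ((underRight C).map_injective (eq_of_heq h))

end CategoryTheory.Sigma

namespace CategoryTheory.ComposableArrows

variable {C : Type u} [SmallCategory C] {n : ℕ}

def toUnderChain (t : ComposableArrows C (n + 1)) : ComposableArrows (Σ A : C, Under A) n :=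
  Under.lift (X := t.obj 0) t.δ₀
    { app i := t.map (homOfLE (Fin.zero_le i.succ))
      naturality _ _ _ := (Category.id_comp _).trans (t.map_comp _ _) } ⋙
    Sigma.incl (t.obj 0)

def ofUnderChain (s : ComposableArrows (Σ A : C, Under A) n) : ComposableArrows C (n + 1) :=
  precomp (s ⋙ underRight C) (s.obj 0).2.hom

lemma ofUnderChain_map_zero_succ (s : ComposableArrows (Σ A : C, Under A) n) (i : Fin (n + 1)) :
    (ofUnderChain s).map (homOfLE (Fin.zero_le i.succ)) =
      (s.obj 0).2.hom ≫ (underRight C).map (s.map (homOfLE (Fin.zero_le i))) := by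
  cases i using Fin.cases with
  | zero =>
    rw [show homOfLE (Fin.zero_le 0) = 𝟙 (0 : Fin (n + 1)) from rfl, s.map_id, Functor.map_id]
    exact (Category.comp_id _).symm
  | succ i => rfl

lemma ofUnderChain_toUnderChain (t : ComposableArrows C (n + 1)) :
    ofUnderChain (toUnderChain t) = t :=
  ext_succ rfl rfl ((conj_eqToHom_iff_heq _ _ rfl rfl).2 HEq.rfl)

lemma toUnderChain_ofUnderChain (s : ComposableArrows (Σ A : C, Under A) n) :
    toUnderChain (ofUnderChain s) = s := by
  have hobj (i : Fin (n + 1)) : (toUnderChain (ofUnderChain s)).obj i = s.obj i := by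
    show (⟨_, Under.mk ((ofUnderChain s).map (homOfLE (Fin.zero_le i.succ)))⟩ :
      Σ A : C, Under A) = _
    rw [ofUnderChain_map_zero_succ]
    exact (Sigma.eq_mk_comp_underRight_map _).symm
  exact Functor.hext hobj fun i j f =>
    Sigma.hom_heq_of_underRight_map_heq (hobj i) (hobj j) HEq.rfl

end CategoryTheory.ComposableArrows

open ComposableArrows

variable {C D : Type u} [SmallCategory C] [SmallCategory D]

def underChainEquiv (n : ℕ) :
    ComposableArrows C (n + 1) ≃ ComposableArrows (Σ A : C, Under A) n :=
  ⟨toUnderChain, ofUnderChain, ofUnderChain_toUnderChain, toUnderChain_ofUnderChain⟩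

lemma toUnderChain_comp {n : ℕ} (G : C ⥤ D) (t : ComposableArrows C (n + 1)) :
    toUnderChain (t ⋙ G) = toUnderChain t ⋙ sigmaUnderMap G :=
  rfl

variable (C) in
def dec0NerveIso : Dec0 (nerve C) ≅ nerve (Σ A : C, Under A) :=
  NatIso.ofComponents (fun U => (underChainEquiv U.unop.len).toIso) fun _ => by
    -- `coneHom α` fixes `0`, so restricting along it commutes with `toUnderChain` on the nose.
    ext
    rfl

lemma dec0NerveIso_hom_naturality (G : C ⥤ D) :
    Dec0map (_root_.nerveMap G) ≫ (dec0NerveIso D).hom =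
      (dec0NerveIso C).hom ≫ _root_.nerveMap (sigmaUnderMap G) := by
  ext U t
  exact toUnderChain_comp G t

/-- Proposition 4.4: for every small category `C` there is an isomorphism of simplicial
sets `N(Dec⁰ C) = N(Σ_{A ∈ C} Under A) ≅ Dec⁰(N C)`, sending a chain
`(A → B₀) → (A → B₁) → ⋯ → (A → B_n)` of objects under `A` to the composable chain
`A → B₀ → B₁ → ⋯ → B_n`, naturally in `C`. -/
theorem stmt10 :
    ∃ iso : ∀ (C : Type u) [SmallCategory C], nerve (Σ A : C, Under A) ≅ Dec0 (nerve C),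
      (∀ (C : Type u) [SmallCategory C] (n : ℕ) (s : nerve (Σ A : C, Under A) _⦋n⦌),
        ((toChain ((iso C).hom.app (op ⦋n⦌) s)).obj 0 = (s.obj 0).1) ∧
        (∀ i : Fin (n + 1),
          (toChain ((iso C).hom.app (op ⦋n⦌) s)).obj i.succ
            = ((s.obj i).2).right) ∧
        ((toChain ((iso C).hom.app (op ⦋n⦌) s)).δ₀
            = s ⋙ underRight C) ∧
        HEq ((toChain ((iso C).hom.app (op ⦋n⦌) s)).map' 0 1 (by omega) (by omega))
          ((s.obj 0).2).hom) ∧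
      (∀ (C D : Type u) [SmallCategory C] [SmallCategory D] (G : C ⥤ D),
        _root_.nerveMap (sigmaUnderMap G) ≫ (iso D).hom = (iso C).hom ≫ Dec0map (_root_.nerveMap G)) := by
  exact ⟨fun C _ => (dec0NerveIso C).symm, fun C _ n s => ⟨rfl, fun _ => rfl, rfl, HEq.rfl⟩,
    fun C D _ _ G => (CommSq.vert_inv ⟨dec0NerveIso_hom_naturality G⟩).w⟩
end

section
/- Let m be a positive integer, let A = (a_{st}) and B = (b_{st}) be 2×2 matrices over ZMod m, and let h ∈ ZMod m, such that a₁₁a₂₂ − a₁₂a₂₁, b₁₁b₂₂ − b₁₂b₂₁, and a₁₂(b₂₁ − b₁₁h) − a₁₁(b₂₂ − b₁₂h) are all units of the ring ZMod m. Let φ₁ : (ZMod m)² → (ZMod m)² be a bijection, and define φ₂(i,j) = (a₁₁i + a₁₂j, a₂₁i + a₂₂j) and φ₃(i,j) = (b₁₁i + b₁₂j, b₂₁i + b₂₂j). Suppose λ, μ : (ZMod m)² → ℝ are nonnegative with Σ λ = Σ μ = 1 and satisfy, for every z ∈ (ZMod m)²: Σ_{(i,j) : φ₁(i,j) = z} λ(i,j)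 = Σ_{(i,j) : φ₁(i,j) = z} μ(i,j); Σ_{(i,j) : φ₂(i,j) = z} λ(i,j) = Σ_{(i,j) : φ₂(i,j) + (0,1) = z} μ(i,j); and Σ_{(i,j) : φ₃(i,j) = z} λ(i,j) = Σ_{(i,j) : φ₃(i,j) + (1,h) = z} μ(i,j). Then λ(i,j) = μ(i,j) = 1/m² for all (i,j) ∈ (ZMod m)². (This is the key lemma about a complete collection of deterministic distributions φ^{i,j} on the three-edge line: the equality of the two convex mixtures Σ λ_{ij} δ^{φ^{i,j}} = Σ μ_{ij} ψ^h·δ^{φ^{i,j}}, where ψ^h takes the values (0,0), (0,1), (1,h) on the three edges, is expressed pointwise edge by edge.) -/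
open scoped BigOperators

lemma aux_lin_bij (m : ℕ) [NeZero m] (a b c d : ZMod m) (hd : IsUnit (a * d - b * c)) :
    Function.Bijective (fun p : ZMod m × ZMod m => (a * p.1 + b * p.2, c * p.1 + d * p.2)) := by
  obtain ⟨u, hu⟩ := hd
  have he : ((u⁻¹ : (ZMod m)ˣ) : ZMod m) * (a * d - b * c) = 1 := by
    rw [← hu]; exact u.inv_mul
  set e := ((u⁻¹ : (ZMod m)ˣ) : ZMod m) with hedef
  refine Function.bijective_iff_has_inverse.mpr
    ⟨fun p => (e * (d * p.1 - b * p.2), e * (a * p.2 - c * p.1)), ?_, ?_⟩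
  · rintro ⟨x, y⟩
    simp only [Prod.mk.injEq]
    constructor
    · linear_combination x * he
    · linear_combination y * he
  · rintro ⟨x, y⟩
    simp only [Prod.mk.injEq]
    constructor
    · linear_combination x * he
    · linear_combination y * he

/-- Lemma 5.6: the key lemma about a complete collection of deterministic distributions on
the three-edge line. If two convex mixtures `Σ λ_{ij} δ^{φ^{i,j}}` and
`Σ μ_{ij} ψ^h·δ^{φ^{i,j}}` agree on the three edges, where the values `φ^{i,j}` on the
edges are a bijection, resp. given by the matrices `A`, `B` with the stated unit
determinant conditions, then all weights equal `1/m²`. -/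
theorem stmt13 (m : ℕ) [NeZero m] (A B : Matrix (Fin 2) (Fin 2) (ZMod m)) (h : ZMod m)
    (hA : IsUnit (A 0 0 * A 1 1 - A 0 1 * A 1 0))
    (hB : IsUnit (B 0 0 * B 1 1 - B 0 1 * B 1 0))
    (hABh : IsUnit (A 0 1 * (B 1 0 - B 0 0 * h) - A 0 0 * (B 1 1 - B 0 1 * h)))
    (φ₁ : ZMod m × ZMod m → ZMod m × ZMod m) (hφ₁ : Function.Bijective φ₁)
    (φ₂ φ₃ : ZMod m × ZMod m → ZMod m × ZMod m)
    (hφ₂ : ∀ i j : ZMod m, φ₂ (i, j) = (A 0 0 * i + A 0 1 * j, A 1 0 * i + A 1 1 * j))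
    (hφ₃ : ∀ i j : ZMod m, φ₃ (i, j) = (B 0 0 * i + B 0 1 * j, B 1 0 * i + B 1 1 * j))
    (lam mu : ZMod m × ZMod m → ℝ)
    (hlam0 : ∀ ij, 0 ≤ lam ij) (hmu0 : ∀ ij, 0 ≤ mu ij)
    (hlam1 : ∑ ij : ZMod m × ZMod m, lam ij = 1)
    (hmu1 : ∑ ij : ZMod m × ZMod m, mu ij = 1)
    (h1 : ∀ z : ZMod m × ZMod m,
      ∑ ij ∈ Finset.univ.filter (fun ij => φ₁ ij = z), lam ij
        = ∑ ij ∈ Finset.univ.filter (fun ij => φ₁ ij = z), mu ij)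
    (h2 : ∀ z : ZMod m × ZMod m,
      ∑ ij ∈ Finset.univ.filter (fun ij => φ₂ ij = z), lam ij
        = ∑ ij ∈ Finset.univ.filter (fun ij => φ₂ ij + (0, 1) = z), mu ij)
    (h3 : ∀ z : ZMod m × ZMod m,
      ∑ ij ∈ Finset.univ.filter (fun ij => φ₃ ij = z), lam ij
        = ∑ ij ∈ Finset.univ.filter (fun ij => φ₃ ij + (1, h) = z), mu ij) :
    ∀ ij : ZMod m × ZMod m, lam ij = ((m : ℝ) ^ 2)⁻¹ ∧ mu ij = ((m : ℝ) ^ 2)⁻¹ := by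
  -- Step A: lam = mu
  have hlm : ∀ w, lam w = mu w := by
    intro w
    have hset : Finset.univ.filter (fun ij => φ₁ ij = φ₁ w) = {w} := by
      ext ij
      simp [hφ₁.injective.eq_iff]
    have := h1 (φ₁ w)
    rwa [hset, Finset.sum_singleton, Finset.sum_singleton] at this
  -- bijectivity of φ₂, φ₃
  have hφ₂eq : φ₂ = fun p : ZMod m × ZMod m =>
      (A 0 0 * p.1 + A 0 1 * p.2, A 1 0 * p.1 + A 1 1 * p.2) :=
    funext fun p => hφ₂ p.1 p.2
  have hφ₃eq : φ₃ = fun p : ZMod m × ZMod m =>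
      (B 0 0 * p.1 + B 0 1 * p.2, B 1 0 * p.1 + B 1 1 * p.2) :=
    funext fun p => hφ₃ p.1 p.2
  have hbij₂ : Function.Bijective φ₂ := by
    rw [hφ₂eq]; exact aux_lin_bij m _ _ _ _ hA
  have hbij₃ : Function.Bijective φ₃ := by
    rw [hφ₃eq]; exact aux_lin_bij m _ _ _ _ hB
  have hadd₂ : ∀ p q : ZMod m × ZMod m, φ₂ (p + q) = φ₂ p + φ₂ q := by
    intro p q
    rw [show p + q = (p.1 + q.1, p.2 + q.2) from rfl, hφ₂ (p.1 + q.1) (p.2 + q.2),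
      hφ₂ p.1 p.2, hφ₂ q.1 q.2, Prod.mk_add_mk]
    simp only [Prod.mk.injEq]
    constructor <;> ring
  have hadd₃ : ∀ p q : ZMod m × ZMod m, φ₃ (p + q) = φ₃ p + φ₃ q := by
    intro p q
    rw [show p + q = (p.1 + q.1, p.2 + q.2) from rfl, hφ₃ (p.1 + q.1) (p.2 + q.2),
      hφ₃ p.1 p.2, hφ₃ q.1 q.2, Prod.mk_add_mk]
    simp only [Prod.mk.injEq]
    constructor <;> ring
  obtain ⟨v₂, hv₂⟩ := hbij₂.surjective ((0 : ZMod m), (1 : ZMod m))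
  obtain ⟨v₃, hv₃⟩ := hbij₃.surjective ((1 : ZMod m), h)
  -- key translations
  have key2 : ∀ u, lam (u + v₂) = lam u := by
    intro u
    have hz : φ₂ (u + v₂) = φ₂ u + (0, 1) := by rw [hadd₂, hv₂]
    have hl : Finset.univ.filter (fun ij => φ₂ ij = φ₂ u + (0, 1)) = {u + v₂} := by
      ext ij
      simp [← hz, hbij₂.injective.eq_iff]
    have hr : Finset.univ.filter (fun ij => φ₂ ij + (0, 1) = φ₂ u + (0, 1)) = {u} := by
      ext ij
      simp [add_left_inj, hbij₂.injective.eq_iff]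
    have := h2 (φ₂ u + (0, 1))
    rw [hl, hr, Finset.sum_singleton, Finset.sum_singleton] at this
    rw [this, ← hlm u]
  have key3 : ∀ u, lam (u + v₃) = lam u := by
    intro u
    have hz : φ₃ (u + v₃) = φ₃ u + (1, h) := by rw [hadd₃, hv₃]
    have hl : Finset.univ.filter (fun ij => φ₃ ij = φ₃ u + (1, h)) = {u + v₃} := by
      ext ij
      simp [← hz, hbij₃.injective.eq_iff]
    have hr : Finset.univ.filter (fun ij => φ₃ ij + (1, h) = φ₃ u + (1, h)) = {u} := by
      ext ij
      simp [add_left_inj, hbij₃.injective.eq_iff]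
    have := h3 (φ₃ u + (1, h))
    rw [hl, hr, Finset.sum_singleton, Finset.sum_singleton] at this
    rw [this, ← hlm u]
  -- nat multiples
  have inv : ∀ v : ZMod m × ZMod m, (∀ u, lam (u + v) = lam u) →
      ∀ (n : ℕ) (u), lam (u + n • v) = lam u := by
    intro v hv n
    induction n with
    | zero => intro u; simp
    | succ k ih =>
      intro u
      have : u + (k + 1) • v = (u + v) + k • v := by
        rw [succ_nsmul]; abel
      rw [this, ih (u + v), hv u]
  -- v₂, v₃ span
  obtain ⟨p, q⟩ := v₂
  obtain ⟨r, s⟩ := v₃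
  have hv₂' := hv₂
  rw [hφ₂ p q, Prod.mk.injEq] at hv₂'
  obtain ⟨e1, e2⟩ := hv₂'
  have hv₃' := hv₃
  rw [hφ₃ r s, Prod.mk.injEq] at hv₃'
  obtain ⟨f1, f2⟩ := hv₃'
  set dA := A 0 0 * A 1 1 - A 0 1 * A 1 0 with hdA
  set dB := B 0 0 * B 1 1 - B 0 1 * B 1 0 with hdB
  have hp : dA * p = -(A 0 1) := by rw [hdA]; linear_combination A 1 1 * e1 - A 0 1 * e2
  have hq : dA * q = A 0 0 := by rw [hdA]; linear_combination (-(A 1 0)) * e1 + A 0 0 * e2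
  have hr' : dB * r = B 1 1 - B 0 1 * h := by
    rw [hdB]; linear_combination B 1 1 * f1 - B 0 1 * f2
  have hs' : dB * s = B 0 0 * h - B 1 0 := by
    rw [hdB]; linear_combination (-(B 1 0)) * f1 + B 0 0 * f2
  have hdet : dA * dB * (p * s - q * r)
      = A 0 1 * (B 1 0 - B 0 0 * h) - A 0 0 * (B 1 1 - B 0 1 * h) := by
    have t1 : (dA * p) * (dB * s) = -(A 0 1) * (B 0 0 * h - B 1 0) := by rw [hp, hs']
    have t2 : (dA * q) * (dB * r) = A 0 0 * (B 1 1 - B 0 1 * h) := by rw [hq, hr']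
    linear_combination t1 - t2
  have hD : IsUnit (p * s - r * q) := by
    have : IsUnit (dA * dB * (p * s - q * r)) := hdet ▸ hABh
    have := isUnit_of_mul_isUnit_right this
    rwa [mul_comm q r] at this
  have hspan := (aux_lin_bij m p r q s hD).surjective
  -- lam is constant
  have hconst : ∀ w : ZMod m × ZMod m, lam w = lam 0 := by
    intro w
    obtain ⟨⟨σ, τ⟩, hστ⟩ := hspan w
    simp only at hστ
    have hw : w = (0 + ZMod.val σ • ((p, q) : ZMod m × ZMod m))
        + ZMod.val τ • ((r, s) : ZMod m × ZMod m) := by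
      rw [← hστ]
      simp only [Prod.ext_iff, Prod.fst_add, Prod.snd_add, Prod.smul_fst, Prod.smul_snd,
        nsmul_eq_mul, ZMod.natCast_val, ZMod.cast_id]
      constructor <;> (simp; ring)
    rw [hw, inv (r, s) key3 _ _, inv (p, q) key2 _ _]
  -- compute value
  have hcard : (Fintype.card (ZMod m × ZMod m) : ℝ) = (m : ℝ) ^ 2 := by
    simp [Fintype.card_prod, ZMod.card]
    ring
  have hsum : ((m : ℝ) ^ 2) * lam 0 = 1 := by
    have : ∑ ij : ZMod m × ZMod m, lam ij = (Fintype.card (ZMod m × ZMod m)) * lam 0 := by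
      rw [Finset.sum_congr rfl fun ij _ => hconst ij, Finset.sum_const, nsmul_eq_mul,
        Finset.card_univ]
    rw [this, hcard] at hlam1
    exact hlam1
  have hval : lam 0 = ((m : ℝ) ^ 2)⁻¹ := eq_inv_of_mul_eq_one_left (by linarith [hsum])
  intro ij
  refine ⟨by rw [hconst ij, hval], by rw [← hlm ij, hconst ij, hval]⟩
end

section
/- Let m be a positive integer and let e₁, e₂ : ZMod m → ZMod m be bijections. For t ∈ ZMod m let S^t : (ZMod m)² → ℝ be given by S^t(a,b) = 1/m if b = a + t and S^t(a,b) = 0 otherwise. Suppose λ, μ : ZMod m → ℝ are nonnegative with Σ_j λ_j = Σ_j μ_j = 1 and satisfy Σ_j λ_j · S^{e₁(j)} = Σ_j μ_j · S^{e₁(j)} and Σ_j λ_j · S^{e₂(j)} = Σ_j μ_j · S^{e₂(j)+1} (equalities of functions on (ZMod m)²). Then λ_j = μ_j = 1/m for every j ∈ ZMod m. (This is the lemma for a complete collection of average distributions q^j on the two-edge line, with q^j taking the values S^{e₁(j)} and S^{e₂(j)} on the two edges, compared against its translate by the simplicial map ψ with values (0,0) and (0,1) on the two edges, using δ^{(0,1)}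 ∗ S^t = S^{t+1}.) -/
open scoped BigOperators

lemma stmt14_key {m : ℕ} [NeZero m] (e : ZMod m ≃ ZMod m) (g : ZMod m → ℝ) (t : ZMod m) :
    ∑ j : ZMod m, (if t = e j then g j else 0) = g (e.symm t) := by
  rw [← Equiv.sum_comp e.symm (fun j => if t = e j then g j else 0)]
  simp [Finset.sum_ite_eq]

/-- Lemma 5.12: the lemma for a complete collection of average distributions on the
two-edge line. If the mixtures `Σ_j λ_j q^j` and `Σ_j μ_j ψ·q^j` agree on the two edges,
where `q^j` takes the values `S^{e₁(j)}` and `S^{e₂(j)}` on the two edges and `ψ` has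
values `(0,0)` and `(0,1)`, then all weights equal `1/m`. -/
theorem stmt14 (m : ℕ) [NeZero m] (e₁ e₂ : ZMod m → ZMod m)
    (he₁ : Function.Bijective e₁) (he₂ : Function.Bijective e₂)
    (S : ZMod m → ZMod m × ZMod m → ℝ)
    (hS : ∀ t a b : ZMod m, S t (a, b) = if b = a + t then (m : ℝ)⁻¹ else 0)
    (lam mu : ZMod m → ℝ)
    (hlam0 : ∀ j, 0 ≤ lam j) (hmu0 : ∀ j, 0 ≤ mu j)
    (hlam1 : ∑ j : ZMod m, lam j = 1) (hmu1 : ∑ j : ZMod m, mu j = 1)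
    (h1 : ∀ ab : ZMod m × ZMod m,
      ∑ j : ZMod m, lam j * S (e₁ j) ab = ∑ j : ZMod m, mu j * S (e₁ j) ab)
    (h2 : ∀ ab : ZMod m × ZMod m,
      ∑ j : ZMod m, lam j * S (e₂ j) ab = ∑ j : ZMod m, mu j * S (e₂ j + 1) ab) :
    ∀ j : ZMod m, lam j = (m : ℝ)⁻¹ ∧ mu j = (m : ℝ)⁻¹ := by
  have hm : (m : ℝ)⁻¹ ≠ 0 := by
    simp [NeZero.ne m]
  set E1 := Equiv.ofBijective e₁ he₁ with hE1
  set E2 := Equiv.ofBijective e₂ he₂ with hE2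
  -- Step 1: lam = mu
  have hlm : ∀ j, lam j = mu j := by
    intro j
    have key := h1 (0, e₁ j)
    have hL : ∀ f : ZMod m → ℝ,
        ∑ k : ZMod m, f k * S (e₁ k) (0, e₁ j) = f j * (m : ℝ)⁻¹ := by
      intro f
      have : ∑ k : ZMod m, f k * S (e₁ k) (0, e₁ j)
          = ∑ k : ZMod m, (if e₁ j = E1 k then f k * (m : ℝ)⁻¹ else 0) := by
        apply Finset.sum_congr rfl
        intro k _
        rw [hS]
        simp only [zero_add, hE1, Equiv.ofBijective_apply]
        split <;> simp_all
      rw [this, stmt14_key E1 (fun k => f k * (m : ℝ)⁻¹)]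
      congr 1
      exact congrArg f (E1.symm_apply_apply j)
    rw [hL lam, hL mu] at key
    exact mul_right_cancel₀ hm key
  -- Step 2: lam (E2.symm t) = lam (E2.symm (t - 1))
  have hshift : ∀ t : ZMod m, lam (E2.symm t) = lam (E2.symm (t - 1)) := by
    intro t
    have key := h2 (0, t)
    have hL : ∑ k : ZMod m, lam k * S (e₂ k) (0, t) = lam (E2.symm t) * (m : ℝ)⁻¹ := by
      have : ∑ k : ZMod m, lam k * S (e₂ k) (0, t)
          = ∑ k : ZMod m, (if t = E2 k then lam k * (m : ℝ)⁻¹ else 0) := by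
        apply Finset.sum_congr rfl
        intro k _
        rw [hS]
        simp only [zero_add, hE2, Equiv.ofBijective_apply]
        split <;> simp_all
      rw [this, stmt14_key E2 (fun k => lam k * (m : ℝ)⁻¹)]
    have hR : ∑ k : ZMod m, mu k * S (e₂ k + 1) (0, t)
        = mu (E2.symm (t - 1)) * (m : ℝ)⁻¹ := by
      have : ∑ k : ZMod m, mu k * S (e₂ k + 1) (0, t)
          = ∑ k : ZMod m, (if t - 1 = E2 k then mu k * (m : ℝ)⁻¹ else 0) := by
        apply Finset.sum_congr rfl
        intro k _
        rw [hS]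
        simp only [zero_add, hE2, Equiv.ofBijective_apply, sub_eq_iff_eq_add]
        split <;> simp_all
      rw [this, stmt14_key E2 (fun k => mu k * (m : ℝ)⁻¹)]
    rw [hL, hR] at key
    have := mul_right_cancel₀ hm key
    rw [this, hlm]
  -- Step 3: lam is constant
  set c := lam (E2.symm 0) with hc
  have hstep : ∀ n : ℕ, lam (E2.symm ((n : ZMod m))) = c := by
    intro n
    induction n with
    | zero => simp [hc]
    | succ k ih =>
        have h := hshift ((k + 1 : ℕ) : ZMod m)
        push_cast at h
        rw [add_sub_cancel_right] at h
        push_cast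
        rw [h]
        exact ih
  have hconst : ∀ j, lam j = c := by
    intro j
    have hj : j = E2.symm (((E2 j).val : ℕ) : ZMod m) := by
      rw [ZMod.natCast_val, ZMod.cast_id, Equiv.symm_apply_apply]
    rw [hj]
    exact hstep _
  -- Step 4: compute c
  have hsum : (m : ℝ) * c = 1 := by
    rw [← hlam1]
    rw [Finset.sum_congr rfl (fun j _ => hconst j)]
    simp [ZMod.card, mul_comm]
  have hcval : c = (m : ℝ)⁻¹ := by
    have hm0 : (m : ℝ) ≠ 0 := Nat.cast_ne_zero.mpr (NeZero.ne m)
    field_simp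
    linarith [hsum]
  intro j
  constructor
  · rw [hconst j, hcval]
  · rw [← hlm j, hconst j, hcval]
end
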